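/- arXiv:2212.03159 — 6 statements merged into one kernel-verified Lean document; each statement's English description precedes it below -/
import Mathlib

section
/- Let α ≤ 0 and 1 ≤ p ≤ ∞. There is no function f ∈ H(𝔻) hypercyclic for T_α for which there exists a constant C > 0 with M_p(f,r) ≤ C·(1−r)^α for all 0 < r < 1. -/
open Filter Set MeasureTheory
open scoped Topology ENNReal Real Classical

noncomputable section

/-- The weighted Taylor shift `T_α` acting on Taylor-coefficient sequences:
`(T_α a) k = a (k+1) * (1 + 1/(k+1))^α`. -/
def Tshift (α : ℝ) (a : ℕ → ℂ) : ℕ → ℂ :=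
  fun k => a (k + 1) * (((1 + 1 / ((k : ℝ) + 1)) ^ α : ℝ) : ℂ)

/-- The holomorphic function on the unit disc determined by a coefficient sequence. -/
def sumFn (a : ℕ → ℂ) : ℂ → ℂ := fun z => ∑' k : ℕ, a k * z ^ k

/-- `a` is the Taylor-coefficient sequence of a function in `H(𝔻)`
(the power series converges on every disc of radius `r < 1`). -/
def InHD (a : ℕ → ℂ) : Prop :=
  ∀ r : ℝ, 0 ≤ r → r < 1 → Summable (fun k : ℕ => ‖a k‖ * r ^ k)

/-- The integral mean `M_p(f, r)`, `1 ≤ p ≤ ∞`, of the function with coefficient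
sequence `a`. -/
def Mp (p : ℝ≥0∞) (a : ℕ → ℂ) (r : ℝ) : ℝ :=
  if p = ∞ then
    sSup ((fun t : ℝ => ‖sumFn a (r * Complex.exp (Complex.I * t))‖) '' Set.Icc 0 (2 * π))
  else
    (1 / (2 * π) * ∫ t in (0:ℝ)..(2 * π),
      ‖sumFn a (r * Complex.exp (Complex.I * t))‖ ^ p.toReal) ^ (1 / p.toReal)

/-- Upper weighted density of `A ⊆ ℕ` associated with a weight sequence `β`. -/
def upperDensityWt (β : ℕ → ℝ) (A : Set ℕ) : ℝ :=
  Filter.limsup (fun n : ℕ =>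
    (∑ k ∈ Finset.Icc 1 n, A.indicator (fun j => β j) k) / ∑ k ∈ Finset.Icc 1 n, β k)
    Filter.atTop

/-- The weight sequence `β^γ = (e^{n^γ})`. -/
def betaGamma (γ : ℝ) : ℕ → ℝ := fun n => Real.exp ((n : ℝ) ^ γ)

/-- `a` is hypercyclic for `T_α`: its orbit is dense in `H(𝔻)` for the topology of
uniform convergence on compact subsets of the unit disc. -/
def Hypercyclic (α : ℝ) (a : ℕ → ℂ) : Prop :=
  ∀ b : ℕ → ℂ, InHD b → ∀ K : Set ℂ, IsCompact K → K ⊆ Metric.ball (0 : ℂ) 1 →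
    ∀ ε : ℝ, 0 < ε → ∃ n : ℕ, ∀ z ∈ K, ‖sumFn ((Tshift α)^[n] a) z - sumFn b z‖ < ε

/-- `a` is `𝒰_β`-frequently hypercyclic for `T_α`: for every nonempty basic open set of
`H(𝔻)`, the set of return times has positive upper `β`-density. -/
def UFHCwt (β : ℕ → ℝ) (α : ℝ) (a : ℕ → ℂ) : Prop :=
  ∀ b : ℕ → ℂ, InHD b → ∀ K : Set ℂ, IsCompact K → K ⊆ Metric.ball (0 : ℂ) 1 →
    ∀ ε : ℝ, 0 < ε →
      0 < upperDensityWt β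
        {n : ℕ | ∀ z ∈ K, ‖sumFn ((Tshift α)^[n] a) z - sumFn b z‖ < ε}

/-- `a` is `𝒰`-frequently hypercyclic for `T_α` (natural upper density of return times). -/
def UFreqHC (α : ℝ) (a : ℕ → ℂ) : Prop := UFHCwt (fun _ => 1) α a

/-- The conjugate exponent `q` of `p` (`q = 1` when `p = ∞`). -/
def qConj (p : ℝ≥0∞) : ℝ := if p = ∞ then 1 else p.toReal / (p.toReal - 1)

/-- The quantity `1 / max(2, q)`, interpreted as `0` when `p = 1`. -/
def critFactor (p : ℝ≥0∞) : ℝ := if p = 1 then 0 else 1 / max 2 (qConj p)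

/-- `limsup_{r → 1⁻}` of a real-valued function of `r ∈ (0,1)`, computed in `EReal`. -/
def limsupR (g : ℝ → ℝ) : EReal :=
  Filter.limsup (fun r : ℝ => (g r : EReal)) (nhdsWithin 1 (Set.Ioo 0 1))

end

/-!
The Cauchy estimate `‖a n‖ rⁿ ≤ M_1(f, r)` (the `n`-th Fourier coefficient of `t ↦ f(r e^{it})`
is `a n rⁿ`) and Jensen's inequality `M_1 ≤ M_p` turn the growth bound into
`‖a n‖ (n + 1)^α = O(1)`, by choosing `r = (n + 1) / (n + 2)`. Since `(T_α^n f)(0) = a n (n + 1)^α`,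
the orbit of `f` is then bounded at the origin, so it cannot approximate large constants.
-/

section IntervalAverage

open scoped Interval

variable {g : ℝ → ℝ} {a b : ℝ}

theorem intervalAverage_le_sSup_image (hab : a < b) (hg : Continuous g) :
    ⨍ t in a..b, g t ≤ sSup (g '' Icc a b) := by
  have hbdd : BddAbove (g '' Icc a b) := (isCompact_Icc.image hg).bddAbove
  have hint : ∫ t in a..b, g t ≤ ∫ _ in a..b, sSup (g '' Icc a b) :=
    intervalIntegral.integral_mono_on hab.le (hg.intervalIntegrable _ _) intervalIntegrable_const
      fun t ht => le_csSup hbdd (mem_image_of_mem g ht)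
  rw [intervalIntegral.integral_const, smul_eq_mul] at hint
  rw [interval_average_eq, smul_eq_mul, inv_mul_le_iff₀ (sub_pos.mpr hab)]
  exact hint

theorem intervalAverage_le_rpow_intervalAverage_rpow (hab : a < b) (hg : Continuous g)
    (hg0 : ∀ t, 0 ≤ g t) {p : ℝ} (hp : 1 ≤ p) :
    ⨍ t in a..b, g t ≤ (⨍ t in a..b, g t ^ p) ^ (1 / p) := by
  have hvol : volume (Ι a b) = ENNReal.ofReal (b - a) := by
    rw [uIoc_of_le hab.le, Real.volume_Ioc]
  have hjensen : (⨍ t in a..b, g t) ^ p ≤ ⨍ t in a..b, g t ^ p :=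
    (convexOn_rpow hp).map_set_average_le
      (continuous_id.rpow_const fun _ => .inr (by linarith)).continuousOn isClosed_Ici
      (by simp [hvol, hab]) (by simp [hvol]) (.of_forall hg0) hg.integrableOn_uIoc
      (hg.rpow_const fun _ => .inr (by linarith)).integrableOn_uIoc
  have havg0 : 0 ≤ ⨍ t in a..b, g t := by
    rw [interval_average_eq, smul_eq_mul]
    exact mul_nonneg (inv_nonneg.mpr (sub_pos.mpr hab).le)
      (intervalIntegral.integral_nonneg hab.le fun t _ => hg0 t)
  calc ⨍ t in a..b, g t = ((⨍ t in a..b, g t) ^ p) ^ (1 / p) := by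
        rw [one_div, Real.rpow_rpow_inv havg0 (by linarith)]
    _ ≤ _ := Real.rpow_le_rpow (by positivity) hjensen (by positivity)

end IntervalAverage

section PowerSeriesOnCircle

open Complex

variable {a : ℕ → ℂ} {r : ℝ}

theorem integral_exp_I_mul_int (m : ℤ) :
    ∫ t in (0:ℝ)..2 * π, exp (I * m * t) = if m = 0 then ((2 * π : ℝ) : ℂ) else 0 := by
  split_ifs with hm
  · simp [hm]
  · have hc : I * m ≠ 0 := mul_ne_zero I_ne_zero (Int.cast_ne_zero.mpr hm)
    have hper : exp (I * m * ((2 * π : ℝ) : ℂ)) = 1 := by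
      rw [← exp_int_mul_two_pi_mul_I m]
      push_cast
      ring_nf
    rw [integral_exp_mul_complex hc, hper]
    simp

theorem norm_coeff_mul_circle_pow (hr : 0 ≤ r) (k : ℕ) (t : ℝ) :
    ‖a k * (r * exp (I * t)) ^ k‖ = ‖a k‖ * r ^ k := by
  rw [mul_comm I, norm_mul, norm_pow, norm_mul, norm_exp_ofReal_mul_I, norm_real,
    Real.norm_of_nonneg hr, mul_one]

theorem summable_coeff_mul_circle_pow (ha : InHD a) (hr0 : 0 ≤ r) (hr1 : r < 1) (t : ℝ) :
    Summable fun k => a k * (r * exp (I * t)) ^ k :=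
  .of_norm <| by simpa only [norm_coeff_mul_circle_pow hr0] using ha r hr0 hr1

theorem continuous_sumFn_circle (ha : InHD a) (hr0 : 0 ≤ r) (hr1 : r < 1) :
    Continuous fun t : ℝ => sumFn a (r * exp (I * t)) :=
  continuous_tsum (fun k => by fun_prop) (ha r hr0 hr1)
    (fun k t => (norm_coeff_mul_circle_pow hr0 k t).le)

theorem circle_pow_mul_exp (k n : ℕ) (t : ℝ) :
    (r * exp (I * t)) ^ k * exp (-(I * n * t)) = r ^ k * exp (I * ((k - n : ℤ) : ℂ) * t) := by
  rw [mul_pow, ← exp_nat_mul, mul_assoc, ← exp_add]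
  push_cast
  ring_nf

theorem integral_sumFn_circle_mul_exp (ha : InHD a) (hr0 : 0 ≤ r) (hr1 : r < 1) (n : ℕ) :
    ∫ t in (0:ℝ)..2 * π, sumFn a (r * exp (I * t)) * exp (-(I * n * t))
      = ((2 * π : ℝ) : ℂ) * (a n * r ^ n) := by
  have hterms : HasSum
      (fun k => ∫ t in (0:ℝ)..2 * π, a k * (r * exp (I * t)) ^ k * exp (-(I * n * t)))
      (∫ t in (0:ℝ)..2 * π, sumFn a (r * exp (I * t)) * exp (-(I * n * t))) := by
    refine intervalIntegral.hasSum_integral_of_dominated_convergence (fun k _ => ‖a k‖ * r ^ k)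
      (fun k => by fun_prop) (fun k => .of_forall fun t _ => ?_)
      (.of_forall fun _ _ => ha r hr0 hr1) intervalIntegrable_const
      (.of_forall fun t _ => (summable_coeff_mul_circle_pow ha hr0 hr1 t).hasSum.mul_right _)
    simp [norm_exp, abs_of_nonneg hr0]
  have hcoeff : ∀ k, ∫ t in (0:ℝ)..2 * π, a k * (r * exp (I * t)) ^ k * exp (-(I * n * t))
      = if k = n then ((2 * π : ℝ) : ℂ) * (a n * r ^ n) else 0 := by
    intro k
    simp_rw [mul_assoc (a k), circle_pow_mul_exp]
    rw [intervalIntegral.integral_const_mul, intervalIntegral.integral_const_mul,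
      integral_exp_I_mul_int]
    simp only [sub_eq_zero, Nat.cast_inj]
    split_ifs with hk
    · subst hk; ring
    · simp
  simp_rw [hcoeff] at hterms
  exact hterms.unique (hasSum_ite_eq n _)

theorem norm_coeff_mul_pow_le_intervalAverage (ha : InHD a) (hr0 : 0 ≤ r) (hr1 : r < 1) (n : ℕ) :
    ‖a n‖ * r ^ n ≤ ⨍ t in (0:ℝ)..2 * π, ‖sumFn a (r * exp (I * t))‖ := by
  have hnorm : ∀ t : ℝ, ‖exp (-(I * n * t))‖ = 1 := fun t => by simp [norm_exp]
  calc ‖a n‖ * r ^ n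
      = (2 * π)⁻¹ * ‖∫ t in (0:ℝ)..2 * π, sumFn a (r * exp (I * t)) * exp (-(I * n * t))‖ := by
        rw [integral_sumFn_circle_mul_exp ha hr0 hr1, norm_mul, norm_mul, norm_pow, norm_real,
          norm_real, Real.norm_of_nonneg Real.two_pi_pos.le, Real.norm_of_nonneg hr0,
          inv_mul_cancel_left₀ Real.two_pi_pos.ne']
    _ ≤ (2 * π)⁻¹ * ∫ t in (0:ℝ)..2 * π, ‖sumFn a (r * exp (I * t)) * exp (-(I * n * t))‖ := by
        gcongr
        exact intervalIntegral.norm_integral_le_integral_norm (by positivity)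
    _ = ⨍ t in (0:ℝ)..2 * π, ‖sumFn a (r * exp (I * t))‖ := by
        simp only [interval_average_eq, sub_zero, smul_eq_mul, norm_mul, hnorm, mul_one]

theorem intervalAverage_norm_sumFn_le_Mp (ha : InHD a) (hr0 : 0 ≤ r) (hr1 : r < 1)
    {p : ℝ≥0∞} (hp : 1 ≤ p) :
    ⨍ t in (0:ℝ)..2 * π, ‖sumFn a (r * exp (I * t))‖ ≤ Mp p a r := by
  have hcont := (continuous_sumFn_circle ha hr0 hr1).norm
  unfold Mp
  split_ifs with hp_top
  · exact intervalAverage_le_sSup_image Real.two_pi_pos hcont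
  · have hp_real : 1 ≤ p.toReal := ENNReal.toReal_one ▸ ENNReal.toReal_mono hp_top hp
    simpa only [interval_average_eq, sub_zero, smul_eq_mul, one_div] using
      intervalAverage_le_rpow_intervalAverage_rpow Real.two_pi_pos hcont (fun _ => norm_nonneg _)
        hp_real

theorem norm_coeff_mul_pow_le_Mp (ha : InHD a) (hr0 : 0 ≤ r) (hr1 : r < 1) {p : ℝ≥0∞}
    (hp : 1 ≤ p) (n : ℕ) : ‖a n‖ * r ^ n ≤ Mp p a r :=
  (norm_coeff_mul_pow_le_intervalAverage ha hr0 hr1 n).trans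
    (intervalAverage_norm_sumFn_le_Mp ha hr0 hr1 hp)

end PowerSeriesOnCircle

theorem Tshift_iterate_apply (α : ℝ) (a : ℕ → ℂ) (n k : ℕ) :
    (Tshift α)^[n] a k = a (k + n) * ((((k + n + 1 : ℝ) / (k + 1)) ^ α : ℝ) : ℂ) := by
  induction n generalizing a with
  | zero => simp [div_self (by positivity : (k + 1 : ℝ) ≠ 0)]
  | succ n ih =>
    have hweight : (1 + 1 / ((k + n : ℕ) + 1 : ℝ)) * ((k + n + 1) / (k + 1))
        = (k + (n + 1 : ℕ) + 1) / (k + 1) := by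
      push_cast
      field_simp
      ring
    rw [Function.iterate_succ_apply, ih, Tshift, mul_assoc, ← Complex.ofReal_mul,
      ← Real.mul_rpow (by positivity) (by positivity), hweight, add_assoc]

theorem sumFn_zero (a : ℕ → ℂ) : sumFn a 0 = a 0 := by
  rw [sumFn, tsum_eq_single 0 fun k hk => by simp [zero_pow hk]]
  simp

theorem inHD_single (c : ℂ) : InHD (Pi.single 0 c) := fun r _ _ =>
  (hasSum_single 0 fun k hk => by simp [Pi.single_eq_of_ne hk]).summable

theorem Hypercyclic.not_bddAbove_norm_iterate_apply_zero {α : ℝ} {a : ℕ → ℂ}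
    (h : Hypercyclic α a) : ¬ BddAbove (range fun n => ‖(Tshift α)^[n] a 0‖) := by
  rintro ⟨B, hB⟩
  obtain ⟨n, hn⟩ := h _ (inHD_single ((B + 1 : ℝ) : ℂ)) {0} isCompact_singleton
    (by simp) 1 one_pos
  have hclose := hn 0 rfl
  rw [sumFn_zero, sumFn_zero, Pi.single_eq_same] at hclose
  have hle : ‖(Tshift α)^[n] a 0‖ ≤ B := hB ⟨n, rfl⟩
  have hB0 : 0 ≤ B := (norm_nonneg _).trans hle
  have htri := norm_sub_norm_le ((B + 1 : ℝ) : ℂ) ((Tshift α)^[n] a 0)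
  rw [norm_sub_rev, Complex.norm_real, Real.norm_of_nonneg (by linarith)] at htri
  linarith

theorem norm_Tshift_iterate_apply_zero (α : ℝ) (a : ℕ → ℂ) (n : ℕ) :
    ‖(Tshift α)^[n] a 0‖ = ‖a n‖ * (n + 1) ^ α := by
  rw [Tshift_iterate_apply, norm_mul, Complex.norm_real,
    Real.norm_of_nonneg (by positivity)]
  simp

/-- Evaluate the bound at `r = (n + 1) / (n + 2)`, where `r ^ n ≥ e⁻¹` and
`(1 - r) (n + 1) = r ≥ 1 / 2`. -/
theorem mul_rpow_le_of_forall_mul_pow_le {α C x : ℝ} (hα : α ≤ 0) (hC : 0 ≤ C) (hx : 0 ≤ x)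
    (n : ℕ) (h : ∀ r ∈ Ioo (0:ℝ) 1, x * r ^ n ≤ C * (1 - r) ^ α) :
    x * (n + 1) ^ α ≤ Real.exp 1 * C * 2 ^ (-α) := by
  set r : ℝ := (n + 1) / (n + 2) with hr_def
  have hr : r ∈ Ioo (0:ℝ) 1 := ⟨by positivity, (div_lt_one (by positivity)).mpr (by linarith)⟩
  have hr_half : 2⁻¹ ≤ r := by
    rw [hr_def, le_div_iff₀ (by positivity)]
    linarith
  have hr_pow : (Real.exp 1)⁻¹ ≤ r ^ n := by
    have hr_inv : r = (1 + ((n + 1 : ℕ) : ℝ)⁻¹)⁻¹ := by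
      rw [hr_def]
      push_cast
      field_simp
      ring
    calc (Real.exp 1)⁻¹ ≤ ((1 + ((n + 1 : ℕ) : ℝ)⁻¹) ^ (n + 1))⁻¹ :=
          inv_anti₀ (by positivity) Real.one_add_inv_pow_le_exp
      _ = r ^ (n + 1) := by rw [hr_inv, inv_pow]
      _ ≤ r ^ n := pow_le_pow_of_le_one hr.1.le hr.2.le n.le_succ
  have hr_compl : (1 - r) * (n + 1) = r := by
    rw [hr_def]
    field_simp
    ring
  calc x * (n + 1) ^ α
      ≤ Real.exp 1 * (x * r ^ n) * (n + 1) ^ α := by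
        gcongr
        calc x = Real.exp 1 * ((Real.exp 1)⁻¹ * x) := by field_simp
          _ ≤ Real.exp 1 * (r ^ n * x) := by gcongr
          _ = Real.exp 1 * (x * r ^ n) := by ring
    _ ≤ Real.exp 1 * (C * (1 - r) ^ α) * (n + 1) ^ α := by
        gcongr Real.exp 1 * ?_ * _
        exact h r hr
    _ = Real.exp 1 * C * r ^ α := by
        rw [mul_assoc, mul_assoc, ← Real.mul_rpow (by linarith [hr.2]) (by positivity),
          hr_compl, mul_assoc]
    _ ≤ Real.exp 1 * C * 2⁻¹ ^ α :=
        mul_le_mul_of_nonneg_left (Real.rpow_le_rpow_of_nonpos (by norm_num) hr_half hα)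
          (by positivity)
    _ = Real.exp 1 * C * 2 ^ (-α) := by
        rw [Real.inv_rpow zero_le_two, Real.rpow_neg zero_le_two]

/-- Theorem 2.2 (1b): for `α ≤ 0` and `1 ≤ p ≤ ∞`, no hypercyclic function for `T_α`
satisfies `M_p(f,r) ≤ C (1-r)^α` on `(0,1)` for some constant `C > 0`. -/
theorem stmt1 (α : ℝ) (hα : α ≤ 0) (p : ℝ≥0∞) (hp : 1 ≤ p) :
    ¬ ∃ a : ℕ → ℂ, InHD a ∧ Hypercyclic α a ∧
      ∃ C : ℝ, 0 < C ∧ ∀ r ∈ Set.Ioo (0:ℝ) 1, Mp p a r ≤ C * (1 - r) ^ α := by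
  rintro ⟨a, ha, hhc, C, hC, hM⟩
  refine hhc.not_bddAbove_norm_iterate_apply_zero
    ⟨Real.exp 1 * C * 2 ^ (-α), forall_mem_range.2 fun n => ?_⟩
  rw [norm_Tshift_iterate_apply_zero]
  refine mul_rpow_le_of_forall_mul_pow_le hα hC.le (norm_nonneg _) n fun r hr => ?_
  exact (norm_coeff_mul_pow_le_Mp ha hr.1.le hr.2 hp n).trans (hM r hr)
end

section
/- Let α > 0 and 1 ≤ p ≤ ∞. For any function φ : [0,1) → ℝ₊ with φ(r) → 0 as r → 1⁻, there is no function f ∈ H(𝔻) hypercyclic for T_α satisfying M_p(f,r) ≤ φ(r) for all 0 < r < 1. -/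
open Filter Set MeasureTheory
open scoped Topology ENNReal Real Classical

/-! Cauchy's estimate bounds the Taylor coefficients of `f = ∑ aₙ zⁿ` by the circle mean,
`‖aₙ‖ rⁿ ≤ M_1(f, r)`, and `M_1(f, r) ≤ M_p(f, r)` (Jensen's inequality for `p < ∞`, the
supremum bound for `p = ∞`). So `‖aₙ‖ rⁿ ≤ φ(r) → 0` as `r → 1⁻`, whence `f = 0`; but the
orbit of `0` is `{0}`, which is not dense. -/

open Real FormalMultilinearSeries

section Coefficients

variable {a : ℕ → ℂ}

lemma sumFn_eq_ofScalars_sum (a : ℕ → ℂ) : sumFn a = (ofScalars ℂ a).sum :=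
  funext fun z => (ofScalars_sum_eq a z).symm

lemma InHD.one_le_radius (ha : InHD a) : 1 ≤ (ofScalars ℂ a).radius :=
  ENNReal.le_of_forall_nnreal_lt fun r hr =>
    le_radius_of_summable_norm _ (by simpa using ha r r.2 (by exact_mod_cast hr))

lemma InHD.hasFPowerSeriesOnBall (ha : InHD a) :
    HasFPowerSeriesOnBall (sumFn a) (ofScalars ℂ a) 0 1 := by
  rw [sumFn_eq_ofScalars_sum]
  exact ((ofScalars ℂ a).hasFPowerSeriesOnBall (zero_lt_one.trans_le ha.one_le_radius)).mono
    zero_lt_one ha.one_le_radius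

lemma InHD.differentiableOn (ha : InHD a) : DifferentiableOn ℂ (sumFn a) (Metric.ball 0 1) := by
  have h := ha.hasFPowerSeriesOnBall.differentiableOn
  rwa [← ENNReal.coe_one, Metric.eball_coe, NNReal.coe_one] at h

lemma InHD.norm_coeff_mul_pow_le_circleAverage (ha : InHD a) {r : ℝ} (hr0 : 0 < r)
    (hr1 : r < 1) (n : ℕ) :
    ‖a n‖ * r ^ n ≤ circleAverage (fun z => ‖sumFn a z‖) 0 r := by
  lift r to NNReal using hr0.le
  have hcauchy := (ha.differentiableOn.mono
    (Metric.closedBall_subset_ball (by exact_mod_cast hr1))).hasFPowerSeriesOnBall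
    (by exact_mod_cast hr0)
  have hcoeff : ofScalars ℂ a = cauchyPowerSeries (sumFn a) 0 r :=
    ha.hasFPowerSeriesOnBall.hasFPowerSeriesAt.eq_formalMultilinearSeries
      hcauchy.hasFPowerSeriesAt
  have hcauchy_le := norm_cauchyPowerSeries_le (sumFn a) 0 r n
  rw [← hcoeff, ofScalars_norm, NNReal.abs_eq, inv_pow] at hcauchy_le
  rw [circleAverage_def, smul_eq_mul, ← le_div_iff₀ (by positivity), div_eq_mul_inv]
  exact hcauchy_le

end Coefficients

section CircleAverage

variable {g : ℂ → ℝ} {c : ℂ} {R : ℝ}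

lemma circleAverage_le_sSup_image_circleMap (hg : Continuous fun θ => g (circleMap c R θ)) :
    circleAverage g c R ≤ sSup ((fun θ => g (circleMap c R θ)) '' Icc 0 (2 * π)) := by
  have hbdd := ((isCompact_Icc (a := 0) (b := 2 * π)).image hg).bddAbove
  have hle : ∫ θ in 0..2 * π, g (circleMap c R θ) ≤
      ∫ _ in 0..2 * π, sSup ((fun θ => g (circleMap c R θ)) '' Icc 0 (2 * π)) :=
    intervalIntegral.integral_mono_on two_pi_pos.le (hg.intervalIntegrable _ _)
      intervalIntegrable_const fun θ hθ => le_csSup hbdd (mem_image_of_mem _ hθ)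
  rw [circleAverage_def, smul_eq_mul, inv_mul_le_iff₀ two_pi_pos]
  simpa using hle

lemma circleAverage_le_circleAverage_rpow_rpow {P : ℝ} (hP : 1 ≤ P)
    (hg0 : ∀ z ∈ Metric.sphere c |R|, 0 ≤ g z)
    (hg : Continuous fun θ => g (circleMap c R θ)) :
    circleAverage g c R ≤ circleAverage (fun z => g z ^ P) c R ^ (1 / P) := by
  have hP0 : 0 < P := zero_lt_one.trans_le hP
  have hvol : volume (uIoc 0 (2 * π)) ≠ 0 := by simp [uIoc_of_le two_pi_pos.le, pi_pos]
  have jensen := (convexOn_rpow hP).map_set_average_le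
    (continuousOn_id.rpow_const fun _ _ => Or.inr hP0.le) isClosed_Ici hvol
    (by rw [uIoc_of_le two_pi_pos.le]; exact measure_Ioc_lt_top.ne)
    (Eventually.of_forall fun θ => hg0 _ (circleMap_mem_sphere' c R θ)) hg.integrableOn_uIoc
    (hg.rpow_const fun _ => Or.inr hP0.le).integrableOn_uIoc
  rw [one_div, Real.le_rpow_inv_iff_of_pos (circleAverage_nonneg_of_nonneg hg0)
    (circleAverage_nonneg_of_nonneg fun z hz => Real.rpow_nonneg (hg0 z hz) P) hP0,
    circleAverage_eq_intervalAverage, circleAverage_eq_intervalAverage]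
  exact jensen

end CircleAverage

section IntegralMeans

variable {a : ℕ → ℂ} {r : ℝ}

lemma Mp_top (a : ℕ → ℂ) (r : ℝ) :
    Mp ∞ a r = sSup ((fun θ => ‖sumFn a (circleMap 0 r θ)‖) '' Icc 0 (2 * π)) := by
  simp [Mp, circleMap_zero, mul_comm]

lemma Mp_of_ne_top {p : ℝ≥0∞} (hp : p ≠ ∞) (a : ℕ → ℂ) (r : ℝ) :
    Mp p a r = circleAverage (fun z => ‖sumFn a z‖ ^ p.toReal) 0 r ^ (1 / p.toReal) := by
  simp [Mp, hp, circleAverage_def, circleMap_zero, mul_comm]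

lemma InHD.continuous_comp_circleMap (ha : InHD a) (hr : |r| < 1) :
    Continuous fun θ => sumFn a (circleMap 0 r θ) :=
  ha.differentiableOn.continuousOn.comp_continuous (continuous_circleMap 0 r) fun θ => by
    simpa [norm_circleMap_zero] using hr

lemma InHD.circleAverage_norm_le_Mp (ha : InHD a) {p : ℝ≥0∞} (hp : 1 ≤ p) (hr : |r| < 1) :
    circleAverage (fun z => ‖sumFn a z‖) 0 r ≤ Mp p a r := by
  have hcont := (ha.continuous_comp_circleMap hr).norm
  by_cases hp_top : p = ∞
  · rw [hp_top, Mp_top]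
    exact circleAverage_le_sSup_image_circleMap hcont
  · rw [Mp_of_ne_top hp_top]
    refine circleAverage_le_circleAverage_rpow_rpow ?_ (fun _ _ => norm_nonneg _) hcont
    simpa using ENNReal.toReal_mono hp_top hp

lemma InHD.eq_zero_of_Mp_le_of_tendsto_zero (ha : InHD a) {p : ℝ≥0∞} (hp : 1 ≤ p)
    {φ : ℝ → ℝ} (hbound : ∀ r ∈ Ioo (0 : ℝ) 1, Mp p a r ≤ φ r)
    (hφ : Tendsto φ (𝓝[<] 1) (𝓝 0)) : a = 0 := by
  funext n
  have hcoeff : ∀ᶠ r in 𝓝[<] 1, ‖a n‖ * r ^ n ≤ φ r := by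
    filter_upwards [Ioo_mem_nhdsLT zero_lt_one] with r hr
    calc ‖a n‖ * r ^ n ≤ circleAverage (fun z => ‖sumFn a z‖) 0 r :=
          ha.norm_coeff_mul_pow_le_circleAverage hr.1 hr.2 n
      _ ≤ Mp p a r := ha.circleAverage_norm_le_Mp hp (by rw [abs_of_pos hr.1]; exact hr.2)
      _ ≤ φ r := hbound r hr
  have hlim : Tendsto (fun r : ℝ => ‖a n‖ * r ^ n) (𝓝[<] 1) (𝓝 ‖a n‖) := by
    simpa using
      ((continuous_pow n).const_mul ‖a n‖).continuousWithinAt.tendsto (x := 1) (s := Iio 1)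
  exact norm_le_zero_iff.mp (le_of_tendsto_of_tendsto hlim hφ hcoeff)

end IntegralMeans

lemma not_hypercyclic_zero (α : ℝ) : ¬ Hypercyclic α 0 := by
  intro h
  have hone : InHD 1 := fun r hr0 hr1 => by simpa using summable_geometric_of_lt_one hr0 hr1
  obtain ⟨n, hn⟩ := h 1 hone {0} isCompact_singleton (by simp) 1 one_pos
  have hiter : (Tshift α)^[n] 0 = 0 := Function.iterate_fixed (by funext k; simp [Tshift]) n
  have hsum : sumFn 1 0 = 1 := by
    rw [sumFn, tsum_eq_single 0 fun k hk => by simp [hk]]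
    simp
  have h0 := hn 0 rfl
  rw [hiter, hsum] at h0
  simp [sumFn] at h0

theorem stmt3_general (α : ℝ) (p : ℝ≥0∞) (hp : 1 ≤ p)
    (φ : ℝ → ℝ)
    (hφ : Tendsto φ (nhdsWithin 1 (Set.Iio (1:ℝ))) (nhds 0)) :
    ¬ ∃ a : ℕ → ℂ, InHD a ∧ Hypercyclic α a ∧
      ∀ r ∈ Set.Ioo (0:ℝ) 1, Mp p a r ≤ φ r := by
  rintro ⟨a, ha, hhc, hbound⟩
  rw [ha.eq_zero_of_Mp_le_of_tendsto_zero hp hbound hφ] at hhc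
  exact not_hypercyclic_zero α hhc

/-- Theorem 2.2 (2b): for `α > 0` and `1 ≤ p ≤ ∞`, if `φ(r) → 0` as `r → 1⁻`, then no
hypercyclic function for `T_α` satisfies `M_p(f,r) ≤ φ(r)` on `(0,1)`. -/
theorem stmt3 (α : ℝ) (hα : 0 < α) (p : ℝ≥0∞) (hp : 1 ≤ p)
    (φ : ℝ → ℝ) (hφ0 : ∀ r ∈ Set.Ico (0:ℝ) 1, 0 ≤ φ r)
    (hφ : Tendsto φ (nhdsWithin 1 (Set.Iio (1:ℝ))) (nhds 0)) :
    ¬ ∃ a : ℕ → ℂ, InHD a ∧ Hypercyclic α a ∧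
      ∀ r ∈ Set.Ioo (0:ℝ) 1, Mp p a r ≤ φ r :=
  stmt3_general α p hp φ hφ
end

section
/- Let N ∈ ℕ and let A_N be a subset of {1,…,N}. If γ ≥ 0, then ∑_{k∈A_N} (k+1)^γ ≥ ((#A_N + 1)^{γ+1} − 1)/(γ+1). If γ < 0 and γ ≠ −1, then ∑_{k∈A_N} (k+1)^γ ≥ ((N+2)^{γ+1}/(γ+1))·(1 − (1 − #A_N/(N+2))^{γ+1}). -/
open Filter Set MeasureTheory
open scoped Topology ENNReal Real Classical

/-!
If `a₁ < ⋯ < aₘ` enumerates `A ⊆ {1, …, N}`, then `i ≤ aᵢ ≤ N - m + i`. For `γ ≥ 0` the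
summand `(k + 1)^γ` is increasing, so the sum is at least `∑_{i=1}^{m} (i + 1)^γ`, which is at
least `∫_1^{m+1} x^γ dx`; for `γ < 0` it is decreasing, so the sum is at least
`∑_{i=1}^{m} (N - m + i + 1)^γ ≥ ∫_{N+2-m}^{N+2} x^γ dx`.
-/

section

open Finset

theorem Monotone.sum_Ico_add_card_le_sum {M : Type*} [AddCommMonoid M] [PartialOrder M]
    [IsOrderedAddMonoid M] {f : ℕ → M} (hf : Monotone f) {a : ℕ} {A : Finset ℕ}
    (hA : ∀ k ∈ A, a ≤ k) : ∑ i ∈ Ico a (a + #A), f i ≤ ∑ k ∈ A, f k := by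
  induction A using Finset.induction_on_max with
  | empty => simp
  | insert b s hb ih =>
    have hbs : b ∉ s := fun h => lt_irrefl b (hb b h)
    have hab : a + #s ≤ b := by
      have hcard := card_le_card fun k hk => mem_Ico.2 ⟨hA k (mem_insert_of_mem hk), hb k hk⟩
      have := hA b (mem_insert_self b s)
      simp only [Nat.card_Ico] at hcard
      omega
    rw [card_insert_of_notMem hbs, sum_insert hbs, ← add_assoc, sum_Ico_succ_top (by omega),
      add_comm]
    exact add_le_add (hf hab) (ih fun k hk => hA k (mem_insert_of_mem hk))

theorem Antitone.sum_Ico_sub_card_le_sum {M : Type*} [AddCommMonoid M] [PartialOrder M]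
    [IsOrderedAddMonoid M] {f : ℕ → M} (hf : Antitone f) {b : ℕ} {A : Finset ℕ}
    (hA : ∀ k ∈ A, k < b) : ∑ i ∈ Ico (b - #A) b, f i ≤ ∑ k ∈ A, f k := by
  induction A using Finset.induction_on_min with
  | empty => simp
  | insert a s ha ih =>
    have has : a ∉ s := fun h => lt_irrefl a (ha a h)
    have hab : a + 1 + #s ≤ b := by
      have hcard := card_le_card fun k hk => mem_Ico.2 ⟨ha k hk, hA k (mem_insert_of_mem hk)⟩
      have := hA a (mem_insert_self a s)
      simp only [Nat.card_Ico] at hcard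
      omega
    rw [card_insert_of_notMem has, sum_insert has, sum_eq_sum_Ico_succ_bot (by omega),
      show b - (#s + 1) + 1 = b - #s by omega]
    exact add_le_add (hf (by omega)) (ih fun k hk => hA k (mem_insert_of_mem hk))

theorem integral_rpow_le_sum_add_one_rpow_of_nonneg {γ : ℝ} (hγ : 0 ≤ γ) {A : Finset ℕ}
    (hA : ∀ k ∈ A, 1 ≤ k) :
    ∫ x in (1 : ℝ)..(#A : ℝ) + 1, x ^ γ ≤ ∑ k ∈ A, ((k : ℝ) + 1) ^ γ := by
  have hmono : Monotone fun k : ℕ => ((k : ℝ) + 1) ^ γ := fun i j hij =>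
    Real.rpow_le_rpow (by positivity) (by gcongr) hγ
  have hint := MonotoneOn.integral_le_sum_Ico (f := fun x : ℝ => x ^ γ) (a := 1)
    (b := 1 + #A) (by omega) fun x hx y _ hxy =>
      Real.rpow_le_rpow (zero_le_one.trans (by simpa using hx.1)) hxy hγ
  push_cast at hint
  rw [add_comm]
  exact hint.trans (hmono.sum_Ico_add_card_le_sum hA)

theorem integral_rpow_le_sum_add_one_rpow_of_nonpos {γ : ℝ} (hγ : γ ≤ 0) {b : ℕ}
    {A : Finset ℕ} (hA : ∀ k ∈ A, k < b) :
    ∫ x in ((b - #A : ℕ) : ℝ) + 1..(b : ℝ) + 1, x ^ γ ≤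
      ∑ k ∈ A, ((k : ℝ) + 1) ^ γ := by
  have hanti : Antitone fun k : ℕ => ((k : ℝ) + 1) ^ γ := fun i j hij =>
    Real.rpow_le_rpow_of_nonpos (by positivity) (by gcongr) hγ
  have hint := AntitoneOn.integral_le_sum_Ico (f := fun x : ℝ => x ^ γ)
    (a := b - #A + 1) (b := b + 1) (by omega) fun x hx y _ hxy =>
      Real.rpow_le_rpow_of_nonpos ((Nat.cast_pos.2 (Nat.succ_pos _)).trans_le hx.1) hxy hγ
  rw [← sum_Ico_add'] at hint
  push_cast at hint
  exact hint.trans (hanti.sum_Ico_sub_card_le_sum hA)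

end

/-- Lemma 3.1: lower bounds for `∑_{k ∈ A_N} (k+1)^γ` where `A_N ⊆ {1,…,N}`. -/
theorem stmt4 (N : ℕ) (A : Finset ℕ) (hA : A ⊆ Finset.Icc 1 N) (γ : ℝ) :
    (0 ≤ γ →
      (((A.card : ℝ) + 1) ^ (γ + 1) - 1) / (γ + 1) ≤ ∑ k ∈ A, ((k : ℝ) + 1) ^ γ) ∧
    (γ < 0 → γ ≠ -1 →
      ((N : ℝ) + 2) ^ (γ + 1) / (γ + 1) *
          (1 - (1 - (A.card : ℝ) / ((N : ℝ) + 2)) ^ (γ + 1)) ≤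
        ∑ k ∈ A, ((k : ℝ) + 1) ^ γ) := by
  refine ⟨fun hγ => ?_, fun hγ hγ' => ?_⟩
  · have h := integral_rpow_le_sum_add_one_rpow_of_nonneg hγ fun k hk =>
      (Finset.mem_Icc.1 (hA hk)).1
    rwa [integral_rpow (Or.inl (by linarith)), Real.one_rpow] at h
  · have hcard : A.card ≤ N := by simpa using Finset.card_le_card hA
    have h := integral_rpow_le_sum_add_one_rpow_of_nonpos (b := N + 1) hγ.le
      fun k hk => Nat.lt_succ_of_le (Finset.mem_Icc.1 (hA hk)).2
    rw [integral_rpow (Or.inr ⟨hγ', Set.notMem_uIcc_of_lt (by positivity) (by positivity)⟩),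
      Nat.cast_sub (by omega)] at h
    have hL : (0 : ℝ) < N + 2 := by positivity
    have hm : (A.card : ℝ) ≤ N + 2 := by norm_cast; omega
    calc _ = (((N : ℝ) + 2) ^ (γ + 1) - ((N : ℝ) + 2 - A.card) ^ (γ + 1)) / (γ + 1) := by
          rw [one_sub_div hL.ne', Real.div_rpow (by linarith) hL.le]
          field_simp
      _ ≤ _ := by convert h using 4 <;> push_cast <;> ring
end

section
/- For every 0 < γ < 1, ∑_{k=1}^n e^{k^γ} is asymptotically equivalent to (n^{1−γ}/γ)·e^{n^γ} as n → ∞; that is, the ratio (∑_{k=1}^n e^{k^γ}) / ((n^{1−γ}/γ)·e^{n^γ}) tends to 1 as n tends to infinity. -/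
open Filter Set MeasureTheory
open scoped Topology ENNReal Real Classical

/-! With `P x = x ^ (1 - γ) / γ * exp (x ^ γ)` one has
`P' x = exp (x ^ γ) * (1 + (1 - γ) / γ * x ^ (-γ))`, so by the mean value theorem the increment
`P (k + 1) - P k` lies between `exp (k ^ γ)` and `exp ((k + 1) ^ γ) * (1 + (1 - γ) / γ * k ^ (-γ))`.
As `(k + 1) ^ γ - k ^ γ → 0`, the increments are asymptotic to `exp ((k + 1) ^ γ)`, and the
Stolz–Cesàro principle turns this into `∑_{k=1}^n exp (k ^ γ) ~ P n - P 0 = P n`. -/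

open Asymptotics Finset Real

theorem Asymptotics.IsEquivalent.sum_range {f g : ℕ → ℝ} (h : f ~[atTop] g) (hg : 0 ≤ g)
    (h'g : Tendsto (fun n => ∑ i ∈ range n, g i) atTop atTop) :
    (fun n => ∑ i ∈ range n, f i) ~[atTop] fun n => ∑ i ∈ range n, g i := by
  refine (h.isLittleO.sum_range hg h'g).congr_left fun n => ?_
  simp only [Pi.sub_apply, sum_sub_distrib]

theorem Real.rpow_add_one_sub_rpow_le {γ x : ℝ} (h0 : 0 ≤ γ) (h1 : γ ≤ 1) (hx : 0 < x) :
    (x + 1) ^ γ - x ^ γ ≤ γ * x ^ (γ - 1) := by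
  have hbern : (1 + x⁻¹) ^ γ ≤ 1 + γ * x⁻¹ :=
    rpow_one_add_le_one_add_mul_self (by linarith [inv_pos.2 hx]) h0 h1
  calc (x + 1) ^ γ - x ^ γ = x ^ γ * ((1 + x⁻¹) ^ γ - 1) := by
        rw [mul_sub, ← mul_rpow hx.le (by positivity), mul_add, mul_inv_cancel₀ hx.ne', mul_one,
          mul_one]
    _ ≤ x ^ γ * (γ * x⁻¹) := by gcongr; linarith
    _ = γ * x ^ (γ - 1) := by rw [rpow_sub_one hx.ne']; ring

theorem Real.tendsto_rpow_add_one_sub_rpow {γ : ℝ} (h0 : 0 ≤ γ) (h1 : γ < 1) :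
    Tendsto (fun x : ℝ => (x + 1) ^ γ - x ^ γ) atTop (𝓝 0) := by
  have hbound : Tendsto (fun x : ℝ => γ * x ^ (γ - 1)) atTop (𝓝 0) := by
    simpa using (tendsto_rpow_neg_atTop (by linarith : 0 < 1 - γ)).const_mul γ
  refine tendsto_of_tendsto_of_tendsto_of_le_of_le' tendsto_const_nhds hbound ?_ ?_
  · filter_upwards [eventually_ge_atTop 0] with x hx
    exact sub_nonneg.2 (rpow_le_rpow hx (by linarith) h0)
  · filter_upwards [eventually_gt_atTop 0] with x hx
    exact rpow_add_one_sub_rpow_le h0 h1.le hx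

noncomputable def expRpowPrimitive (γ x : ℝ) : ℝ := x ^ (1 - γ) / γ * exp (x ^ γ)

section expRpowPrimitive

variable {γ x : ℝ}

theorem expRpowPrimitive_zero (h1 : γ < 1) : expRpowPrimitive γ 0 = 0 := by
  simp [expRpowPrimitive, zero_rpow (sub_pos.2 h1).ne']

theorem continuous_expRpowPrimitive (h0 : 0 < γ) (h1 : γ < 1) :
    Continuous (expRpowPrimitive γ) :=
  ((continuous_rpow_const (sub_pos.2 h1).le).div_const γ).mul
    (continuous_exp.comp (continuous_rpow_const h0.le))

theorem hasDerivAt_expRpowPrimitive (h0 : γ ≠ 0) (hx : 0 < x) :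
    HasDerivAt (expRpowPrimitive γ) (exp (x ^ γ) * (1 + (1 - γ) / γ * x ^ (-γ))) x := by
  have hpow := (hasDerivAt_rpow_const (p := 1 - γ) (Or.inl hx.ne')).div_const γ
  have hexp := (hasDerivAt_rpow_const (p := γ) (Or.inl hx.ne')).exp
  refine (hpow.mul hexp).congr_deriv ?_
  have hcancel : x ^ (1 - γ) * x ^ (γ - 1) = 1 := by rw [← rpow_add hx]; simp
  rw [show 1 - γ - 1 = -γ by ring]
  field_simp
  linear_combination γ * hcancel

theorem exists_expRpowPrimitive_add_one_sub_eq (h0 : 0 < γ) (h1 : γ < 1) (hx : 0 ≤ x) :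
    ∃ ξ ∈ Ioo x (x + 1), expRpowPrimitive γ (x + 1) - expRpowPrimitive γ x =
      exp (ξ ^ γ) * (1 + (1 - γ) / γ * ξ ^ (-γ)) := by
  obtain ⟨ξ, hξ, hslope⟩ := exists_hasDerivAt_eq_slope (expRpowPrimitive γ) _ (lt_add_one x)
    (continuous_expRpowPrimitive h0 h1).continuousOn
    fun y hy => hasDerivAt_expRpowPrimitive h0.ne' (hx.trans_lt hy.1)
  rw [add_sub_cancel_left, div_one] at hslope
  exact ⟨ξ, hξ, hslope.symm⟩

theorem exp_rpow_le_expRpowPrimitive_add_one_sub (h0 : 0 < γ) (h1 : γ < 1) (hx : 0 ≤ x) :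
    exp (x ^ γ) ≤ expRpowPrimitive γ (x + 1) - expRpowPrimitive γ x := by
  obtain ⟨ξ, ⟨hxξ, -⟩, heq⟩ := exists_expRpowPrimitive_add_one_sub_eq h0 h1 hx
  have hcorr : 0 ≤ (1 - γ) / γ * ξ ^ (-γ) := by
    have := sub_pos.2 h1
    have := hx.trans_lt hxξ
    positivity
  rw [heq]
  calc exp (x ^ γ) ≤ exp (ξ ^ γ) := exp_le_exp.2 (rpow_le_rpow hx hxξ.le h0.le)
    _ ≤ _ := le_mul_of_one_le_right (exp_pos _).le (by linarith)

theorem expRpowPrimitive_add_one_sub_le (h0 : 0 < γ) (h1 : γ < 1) (hx : 0 < x) :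
    expRpowPrimitive γ (x + 1) - expRpowPrimitive γ x ≤
      exp ((x + 1) ^ γ) * (1 + (1 - γ) / γ * x ^ (-γ)) := by
  obtain ⟨ξ, ⟨hxξ, hξx⟩, heq⟩ := exists_expRpowPrimitive_add_one_sub_eq h0 h1 hx.le
  have hξ : 0 < ξ := hx.trans hxξ
  have hcoef : 0 ≤ (1 - γ) / γ := div_nonneg (sub_pos.2 h1).le h0.le
  rw [heq]
  refine mul_le_mul (exp_le_exp.2 (rpow_le_rpow hξ.le hξx.le h0.le)) ?_ (by positivity)
    (exp_pos _).le
  have hdecay : ξ ^ (-γ) ≤ x ^ (-γ) := rpow_le_rpow_of_nonpos hx hxξ.le (neg_nonpos.2 h0.le)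
  gcongr

theorem tendsto_expRpowPrimitive_add_one_sub_div_exp (h0 : 0 < γ) (h1 : γ < 1) :
    Tendsto (fun x => (expRpowPrimitive γ (x + 1) - expRpowPrimitive γ x) / exp ((x + 1) ^ γ))
      atTop (𝓝 1) := by
  have hlower : Tendsto (fun x : ℝ => exp (-((x + 1) ^ γ - x ^ γ))) atTop (𝓝 1) := by
    simpa using (tendsto_rpow_add_one_sub_rpow h0.le h1).neg.rexp
  have hupper : Tendsto (fun x : ℝ => 1 + (1 - γ) / γ * x ^ (-γ)) atTop (𝓝 1) := by
    simpa using ((tendsto_rpow_neg_atTop h0).const_mul ((1 - γ) / γ)).const_add 1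
  refine tendsto_of_tendsto_of_tendsto_of_le_of_le' hlower hupper ?_ ?_ <;>
    filter_upwards [eventually_gt_atTop 0] with x hx
  · rw [le_div_iff₀ (exp_pos _), ← exp_add, neg_sub, sub_add_cancel]
    exact exp_rpow_le_expRpowPrimitive_add_one_sub h0 h1 hx.le
  · rw [div_le_iff₀' (exp_pos _)]
    exact expRpowPrimitive_add_one_sub_le h0 h1 hx

theorem tendsto_expRpowPrimitive_atTop (h0 : 0 < γ) (h1 : γ < 1) :
    Tendsto (expRpowPrimitive γ) atTop atTop :=
  ((tendsto_rpow_atTop (sub_pos.2 h1)).atTop_div_const h0).atTop_mul_atTop₀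
    (tendsto_exp_atTop.comp (tendsto_rpow_atTop h0))

end expRpowPrimitive

/-- For `0 < γ < 1`, `∑_{k=1}^n e^{k^γ} ∼ (n^{1-γ}/γ) e^{n^γ}` as `n → ∞`. -/
theorem stmt10 (γ : ℝ) (h0 : 0 < γ) (h1 : γ < 1) :
    Tendsto (fun n : ℕ =>
        (∑ k ∈ Finset.Icc 1 n, Real.exp ((k : ℝ) ^ γ)) /
          (((n : ℝ) ^ (1 - γ) / γ) * Real.exp ((n : ℝ) ^ γ)))
      atTop (nhds 1) := by
  set P := expRpowPrimitive γ
  have hPtop : Tendsto (fun n : ℕ => P n) atTop atTop :=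
    (tendsto_expRpowPrimitive_atTop h0 h1).comp tendsto_natCast_atTop_atTop
  have htelescope : ∀ n : ℕ, ∑ i ∈ range n, (P (i + 1) - P i) = P n := fun n => by
    simpa [P, expRpowPrimitive_zero h1] using sum_range_sub (fun i : ℕ => P i) n
  have hterm : (fun i : ℕ => exp (((i : ℝ) + 1) ^ γ)) ~[atTop] fun i => P (i + 1) - P i :=
    (isEquivalent_of_tendsto_one ((tendsto_expRpowPrimitive_add_one_sub_div_exp h0 h1).comp
      tendsto_natCast_atTop_atTop)).symm
  have hsum := hterm.sum_range
    (fun i => (exp_pos _).le.trans (exp_rpow_le_expRpowPrimitive_add_one_sub h0 h1 i.cast_nonneg))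
    (by simpa only [htelescope] using hPtop)
  simp only [htelescope] at hsum
  refine ((isEquivalent_iff_tendsto_one (hPtop.eventually_ne_atTop 0)).1 hsum).congr fun n => ?_
  rw [Pi.div_apply, ← Finset.Ico_add_one_right_eq_Icc, sum_Ico_eq_sum_range, add_tsub_cancel_right]
  push_cast
  simp_rw [add_comm (1 : ℝ)]
  rfl
end

section
/- Let 0 < γ ≤ 1. There exists a subset E_γ ⊆ ℕ such that d̄_{β^γ}(E_γ) > 0 and, for every 0 ≤ γ' < γ, d̄_{β^{γ'}}(E_γ) = 0. -/
open Filter Set MeasureTheory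
open scoped Topology ENNReal Real Classical

/-! For `0 ≤ g ≤ 1` the weight `∑_{k ≤ n} e^{k^g}` is of order `n^{1-g} e^{n^g}`: by concavity of
`t ↦ t^g`, `e^{k^g}` stays within a factor `e²` of `e^{n^g}` on the last `≈ n^{1-g}` integers up to
`n`, and below them it is dominated by a geometric sequence of ratio `e^{-g n^{g-1}}`.

Take for `E_γ` the union of the blocks `(N - ⌈N^{1-γ}⌉, N]` over the powers `N = B^{j+1}`. At
`n = N` the last block carries a fixed fraction of the `β^γ`-weight. On the other hand `E_γ` has at
most `(log_B n + 1) · 2 (B n)^{1-γ} = o(n^{1-g})` elements up to `n` when `g < γ`, and these carry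
a vanishing fraction of the `β^g`-weight. -/

namespace Real

theorem rpow_le_tangent {g a b : ℝ} (hg0 : 0 ≤ g) (hg1 : g ≤ 1) (ha : 0 < a) (hb : 0 ≤ b) :
    b ^ g ≤ a ^ g + g * a ^ (g - 1) * (b - a) := by
  have h := rpow_one_add_le_one_add_mul_self (s := b / a - 1) (by linarith [div_nonneg hb ha.le])
    hg0 hg1
  rw [add_sub_cancel, div_rpow hb ha.le, div_le_iff₀ (rpow_pos_of_pos ha g)] at h
  calc b ^ g ≤ (1 + g * (b / a - 1)) * a ^ g := h
    _ = a ^ g + g * (a ^ g / a) * (b - a) := by field_simp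
    _ = a ^ g + g * a ^ (g - 1) * (b - a) := by rw [rpow_sub_one ha.ne']

theorem rpow_le_rpow_add_two {g x y : ℝ} (hg0 : 0 ≤ g) (hg1 : g ≤ 1) (hx : 0 < x)
    (hxy : x / 2 ≤ y) (hyx : x - y ≤ x ^ (1 - g)) : x ^ g ≤ y ^ g + 2 := by
  have hy : 0 < y := by linarith
  have hdrop : y ^ (g - 1) ≤ 2 * x ^ (g - 1) := by
    calc y ^ (g - 1) ≤ (x / 2) ^ (g - 1) := rpow_le_rpow_of_nonpos (by positivity) hxy (by linarith)
      _ = 2 ^ (1 - g) * x ^ (g - 1) := by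
        rw [div_rpow hx.le zero_le_two, div_eq_mul_inv, ← rpow_neg zero_le_two, neg_sub, mul_comm]
      _ ≤ 2 * x ^ (g - 1) := by
        gcongr
        exact rpow_le_self_of_one_le one_le_two (by linarith)
  have hx1 : x ^ (g - 1) * x ^ (1 - g) = 1 := by rw [← rpow_add hx]; simp
  have hslope : g * y ^ (g - 1) * (x - y) ≤ 2 := by
    rcases le_total x y with h | h
    · exact (mul_nonpos_of_nonneg_of_nonpos (by positivity) (by linarith)).trans zero_le_two
    calc g * y ^ (g - 1) * (x - y) ≤ 1 * (2 * x ^ (g - 1)) * x ^ (1 - g) := by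
          gcongr
      _ = 2 := by rw [one_mul, mul_assoc, hx1, mul_one]
  linarith [rpow_le_tangent hg0 hg1 hy hx.le]

theorem one_div_one_sub_exp_neg_le {x : ℝ} (hx0 : 0 < x) (hx1 : x ≤ 1) :
    1 / (1 - exp (-x)) ≤ 2 / x := by
  have h : exp (-x) * (1 + x) ≤ 1 := by
    rw [exp_neg, inv_mul_le_iff₀ (exp_pos x), mul_one, add_comm]
    exact add_one_le_exp x
  rw [div_le_div_iff₀ (by nlinarith) hx0]
  nlinarith

end Real

namespace betaGamma

variable {g : ℝ}

theorem pos (g : ℝ) (k : ℕ) : 0 < betaGamma g k := Real.exp_pos _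

theorem monotone (hg : 0 ≤ g) : Monotone (betaGamma g) := fun _ _ h =>
  Real.exp_le_exp.mpr (Real.rpow_le_rpow (Nat.cast_nonneg _) (Nat.cast_le.mpr h) hg)

theorem mul_exp_le_sum_Ioc (hg0 : 0 ≤ g) (hg1 : g ≤ 1) {N L : ℕ} (hN : 1 ≤ N)
    (hL : (L : ℝ) ≤ (N : ℝ) ^ (1 - g) + 1) (hLN : 2 * L ≤ N + 2) :
    L * Real.exp ((N : ℝ) ^ g - 2) ≤ ∑ k ∈ Finset.Ioc (N - L) N, betaGamma g k := by
  have hcard : (Finset.Ioc (N - L) N).card = L := by rw [Nat.card_Ioc]; omega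
  have hterm : ∀ k ∈ Finset.Ioc (N - L) N, Real.exp ((N : ℝ) ^ g - 2) ≤ betaGamma g k := by
    intro k hk
    rw [Finset.mem_Ioc] at hk
    have hk2 : (N : ℝ) / 2 ≤ k := by
      rw [div_le_iff₀ zero_lt_two]; exact_mod_cast (by omega : N ≤ k * 2)
    have hkN : (N : ℝ) - k ≤ L - 1 := by
      have : ((N + 1 : ℕ) : ℝ) ≤ ((k + L : ℕ) : ℝ) := by exact_mod_cast (by omega : N + 1 ≤ k + L)
      push_cast at this
      linarith
    refine Real.exp_le_exp.mpr ?_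
    linarith [Real.rpow_le_rpow_add_two hg0 hg1 (by positivity) hk2 (by linarith)]
  simpa [hcard] using Finset.card_nsmul_le_sum _ _ _ hterm

theorem mul_exp_le_sum_Icc (hg0 : 0 ≤ g) (hg1 : g ≤ 1) {n : ℕ} (hn : 1 ≤ n) :
    (n : ℝ) ^ (1 - g) / 2 * Real.exp ((n : ℝ) ^ g - 2) ≤
      ∑ k ∈ Finset.Icc 1 n, betaGamma g k := by
  set L := ⌈(n : ℝ) ^ (1 - g) / 2⌉₊
  have hn1 : (1 : ℝ) ≤ n := by exact_mod_cast hn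
  have hpow : (n : ℝ) ^ (1 - g) ≤ n := Real.rpow_le_self_of_one_le hn1 (by linarith)
  have hpow1 : 1 ≤ (n : ℝ) ^ (1 - g) := Real.one_le_rpow hn1 (by linarith)
  have hL : (L : ℝ) < (n : ℝ) ^ (1 - g) / 2 + 1 := Nat.ceil_lt_add_one (by positivity)
  have hLN : 2 * L ≤ n + 2 := by
    have : ((2 * L : ℕ) : ℝ) ≤ ((n + 2 : ℕ) : ℝ) := by push_cast; linarith
    exact_mod_cast this
  calc (n : ℝ) ^ (1 - g) / 2 * Real.exp ((n : ℝ) ^ g - 2)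
      ≤ L * Real.exp ((n : ℝ) ^ g - 2) := by gcongr; exact Nat.le_ceil _
    _ ≤ ∑ k ∈ Finset.Ioc (n - L) n, betaGamma g k :=
      mul_exp_le_sum_Ioc hg0 hg1 hn (by linarith) hLN
    _ ≤ ∑ k ∈ Finset.Icc 1 n, betaGamma g k := by
      refine Finset.sum_le_sum_of_subset_of_nonneg ?_ fun k _ _ => (pos g k).le
      intro k; simp only [Finset.mem_Ioc, Finset.mem_Icc]; omega

/-- Below the tangent line of `t ↦ t^g` at `n`, `e^{k^g}` is dominated by a geometric sequence of
ratio `e^{-g n^{g-1}}`. -/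
theorem sum_Icc_le (hg0 : 0 < g) (hg1 : g ≤ 1) {n : ℕ} (hn : 1 ≤ n) :
    ∑ k ∈ Finset.Icc 1 n, betaGamma g k ≤ 2 / g * (n : ℝ) ^ (1 - g) * Real.exp ((n : ℝ) ^ g) := by
  have hn1 : (1 : ℝ) ≤ n := by exact_mod_cast hn
  have hn0 : (0 : ℝ) < n := by linarith
  set x := g * (n : ℝ) ^ (g - 1) with hx
  have hx0 : 0 < x := by positivity
  have hx1 : x ≤ 1 := by
    simpa using mul_le_mul hg1 (Real.rpow_le_one_of_one_le_of_nonpos hn1 (by linarith))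
      (by positivity) zero_le_one
  set r := Real.exp (-x)
  have hr1 : r < 1 := Real.exp_lt_one_iff.mpr (by linarith)
  have hterm : ∀ k ∈ Finset.Icc 1 n, betaGamma g k ≤ Real.exp ((n : ℝ) ^ g) * r ^ (n - k) := by
    intro k hk
    rw [Finset.mem_Icc] at hk
    rw [← Real.exp_nat_mul, ← Real.exp_add, Nat.cast_sub hk.2]
    refine Real.exp_le_exp.mpr ?_
    nlinarith [Real.rpow_le_tangent hg0.le hg1 hn0 (Nat.cast_nonneg k)]
  have hgeom : ∑ k ∈ Finset.Icc 1 n, r ^ (n - k) ≤ 1 / (1 - r) := by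
    have := Finset.sum_Ico_reflect (fun m => r ^ m) 1 (le_refl (n + 1))
    rw [Nat.sub_self, Nat.add_sub_cancel] at this
    rw [← Finset.Ico_add_one_right_eq_Icc, this]
    simpa using geom_sum_Ico_le_of_lt_one (Real.exp_pos _).le hr1 (m := 0) (n := n)
  have hxn : 2 / x = 2 / g * (n : ℝ) ^ (1 - g) := by
    rw [hx, show 1 - g = -(g - 1) by ring, Real.rpow_neg hn0.le]
    field_simp
  calc ∑ k ∈ Finset.Icc 1 n, betaGamma g k
      ≤ ∑ k ∈ Finset.Icc 1 n, Real.exp ((n : ℝ) ^ g) * r ^ (n - k) := Finset.sum_le_sum hterm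
    _ ≤ Real.exp ((n : ℝ) ^ g) * (2 / x) := by
      rw [← Finset.mul_sum]
      gcongr
      exact hgeom.trans (Real.one_div_one_sub_exp_neg_le hx0 hx1)
    _ = 2 / g * (n : ℝ) ^ (1 - g) * Real.exp ((n : ℝ) ^ g) := by rw [hxn]; ring

end betaGamma

section upperDensityWt

variable {β : ℕ → ℝ}

theorem sum_indicator_le_card_filter_mul (hβ : Monotone β) (E : Set ℕ) (n : ℕ) :
    ∑ k ∈ Finset.Icc 1 n, E.indicator β k ≤ ((Finset.Icc 1 n).filter (· ∈ E)).card * β n := by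
  rw [Finset.sum_indicator_eq_sum_filter, ← nsmul_eq_mul]
  refine Finset.sum_le_card_nsmul _ _ _ fun k hk => hβ ?_
  exact (Finset.mem_Icc.mp (Finset.mem_filter.mp hk).1).2

theorem sum_indicator_div_sum_nonneg (hβ : ∀ k, 0 ≤ β k) (E : Set ℕ) (n : ℕ) :
    0 ≤ (∑ k ∈ Finset.Icc 1 n, E.indicator β k) / ∑ k ∈ Finset.Icc 1 n, β k :=
  div_nonneg (Finset.sum_nonneg fun k _ => Set.indicator_nonneg (fun j _ => hβ j) k)
    (Finset.sum_nonneg fun k _ => hβ k)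

theorem sum_indicator_div_sum_le_one (hβ : ∀ k, 0 ≤ β k) (E : Set ℕ) (n : ℕ) :
    (∑ k ∈ Finset.Icc 1 n, E.indicator β k) / ∑ k ∈ Finset.Icc 1 n, β k ≤ 1 :=
  div_le_one_of_le₀ (Finset.sum_le_sum fun k _ => Set.indicator_le_self' (fun j _ => hβ j) k)
    (Finset.sum_nonneg fun k _ => hβ k)

end upperDensityWt

theorem upperDensityWt_betaGamma_pos {g : ℝ} (hg0 : 0 < g) (hg1 : g ≤ 1) {E : Set ℕ}
    (hE : ∃ᶠ N : ℕ in atTop, ∃ L : ℕ, (N : ℝ) ^ (1 - g) ≤ L ∧ (L : ℝ) ≤ (N : ℝ) ^ (1 - g) + 1 ∧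
      2 * L ≤ N + 2 ∧ Set.Ioc (N - L) N ⊆ E) :
    0 < upperDensityWt (betaGamma g) E := by
  have hβ : ∀ k, 0 ≤ betaGamma g k := fun k => (betaGamma.pos g k).le
  have hfreq : ∃ᶠ N in atTop, g * Real.exp (-2) / 2 ≤
      (∑ k ∈ Finset.Icc 1 N, E.indicator (betaGamma g) k) /
        ∑ k ∈ Finset.Icc 1 N, betaGamma g k := by
    refine (hE.and_eventually (eventually_ge_atTop 1)).mono ?_
    rintro N ⟨⟨L, hL, hL', hLN, hblock⟩, hN⟩
    have hsum_pos : 0 < ∑ k ∈ Finset.Icc 1 N, betaGamma g k :=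
      Finset.sum_pos (fun k _ => betaGamma.pos g k) ⟨1, Finset.mem_Icc.mpr ⟨le_rfl, hN⟩⟩
    have hIoc : Finset.Ioc (N - L) N ⊆ Finset.Icc 1 N := by
      intro k; simp only [Finset.mem_Ioc, Finset.mem_Icc]; omega
    rw [le_div_iff₀ hsum_pos]
    calc g * Real.exp (-2) / 2 * ∑ k ∈ Finset.Icc 1 N, betaGamma g k
        ≤ g * Real.exp (-2) / 2 * (2 / g * (N : ℝ) ^ (1 - g) * Real.exp ((N : ℝ) ^ g)) := by
          gcongr; exact betaGamma.sum_Icc_le hg0 hg1 hN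
      _ = (N : ℝ) ^ (1 - g) * Real.exp ((N : ℝ) ^ g - 2) := by
          rw [Real.exp_sub, Real.exp_neg]; field_simp
      _ ≤ L * Real.exp ((N : ℝ) ^ g - 2) := by gcongr
      _ ≤ ∑ k ∈ Finset.Ioc (N - L) N, betaGamma g k :=
          betaGamma.mul_exp_le_sum_Ioc hg0.le hg1 hN hL' hLN
      _ = ∑ k ∈ Finset.Ioc (N - L) N, E.indicator (betaGamma g) k :=
          Finset.sum_congr rfl fun k hk =>
            (Set.indicator_of_mem (hblock (by simpa using hk)) _).symm
      _ ≤ ∑ k ∈ Finset.Icc 1 N, E.indicator (betaGamma g) k :=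
          Finset.sum_le_sum_of_subset_of_nonneg hIoc fun k _ _ =>
            Set.indicator_nonneg (fun j _ => hβ j) k
  have hbdd := isBoundedUnder_of (f := atTop) ⟨1, sum_indicator_div_sum_le_one hβ E⟩
  exact (by positivity : 0 < g * Real.exp (-2) / 2).trans_le (le_limsup_of_frequently_le hfreq hbdd)

theorem upperDensityWt_betaGamma_eq_zero {g : ℝ} (hg0 : 0 ≤ g) (hg1 : g ≤ 1) {E : Set ℕ}
    (hE : Tendsto (fun n : ℕ => (((Finset.Icc 1 n).filter (· ∈ E)).card : ℝ) / (n : ℝ) ^ (1 - g))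
      atTop (𝓝 0)) :
    upperDensityWt (betaGamma g) E = 0 := by
  refine Tendsto.limsup_eq (squeeze_zero' (Eventually.of_forall
    (sum_indicator_div_sum_nonneg (fun k => (betaGamma.pos g k).le) E)) ?_
    (by simpa using hE.const_mul (2 * Real.exp 2)))
  filter_upwards [eventually_ge_atTop 1] with n hn
  set c : ℝ := (((Finset.Icc 1 n).filter (· ∈ E)).card : ℝ)
  have hpow : 0 < (n : ℝ) ^ (1 - g) := Real.rpow_pos_of_pos (by exact_mod_cast hn) _
  have hsum := betaGamma.mul_exp_le_sum_Icc hg0 hg1 hn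
  rw [div_le_iff₀ ((by positivity : (0 : ℝ) < _).trans_le hsum)]
  calc ∑ k ∈ Finset.Icc 1 n, E.indicator (betaGamma g) k
      ≤ c * betaGamma g n := sum_indicator_le_card_filter_mul (betaGamma.monotone hg0) E n
    _ = 2 * Real.exp 2 * (c / (n : ℝ) ^ (1 - g)) *
          ((n : ℝ) ^ (1 - g) / 2 * Real.exp ((n : ℝ) ^ g - 2)) := by
      rw [betaGamma, Real.exp_sub]; field_simp
    _ ≤ _ := by gcongr

noncomputable def blockLen (γ : ℝ) (N : ℕ) : ℕ := ⌈(N : ℝ) ^ (1 - γ)⌉₊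

def blockSet (γ : ℝ) (B : ℕ) : Set ℕ :=
  ⋃ j : ℕ, Set.Ioc (B ^ (j + 1) - blockLen γ (B ^ (j + 1))) (B ^ (j + 1))

namespace blockLen

variable {γ : ℝ} {N : ℕ}

theorem rpow_le (γ : ℝ) (N : ℕ) : (N : ℝ) ^ (1 - γ) ≤ blockLen γ N := Nat.le_ceil _

theorem lt_rpow_add_one (γ : ℝ) (N : ℕ) : (blockLen γ N : ℝ) < (N : ℝ) ^ (1 - γ) + 1 :=
  Nat.ceil_lt_add_one (Real.rpow_nonneg (Nat.cast_nonneg N) _)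

theorem le_two_mul_rpow (hγ : γ ≤ 1) (hN : 1 ≤ N) : (blockLen γ N : ℝ) ≤ 2 * (N : ℝ) ^ (1 - γ) := by
  have : 1 ≤ (N : ℝ) ^ (1 - γ) := Real.one_le_rpow (by exact_mod_cast hN) (by linarith)
  linarith [lt_rpow_add_one γ N]

theorem monotone (hγ : γ ≤ 1) : Monotone (blockLen γ) := fun _ _ h =>
  Nat.ceil_mono (Real.rpow_le_rpow (Nat.cast_nonneg _) (Nat.cast_le.mpr h) (by linarith))

theorem two_mul_le (hN : 2 ≤ (N : ℝ) ^ γ) : 2 * blockLen γ N ≤ N + 2 := by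
  have hN0 : (0 : ℝ) < N := by
    rcases Nat.eq_zero_or_pos N with h | h
    · rw [h, Nat.cast_zero] at hN; linarith [Real.zero_rpow_le_one γ]
    · exact_mod_cast h
  have hhalf : (N : ℝ) ^ (1 - γ) ≤ N / 2 := by
    rw [Real.rpow_sub hN0, Real.rpow_one]; gcongr
  have : ((2 * blockLen γ N : ℕ) : ℝ) ≤ ((N + 2 : ℕ) : ℝ) := by
    push_cast; linarith [lt_rpow_add_one γ N]
  exact_mod_cast this

end blockLen

namespace blockSet

variable {γ : ℝ} {B : ℕ}

theorem two_mul_blockLen_pow_le (hγ : 0 ≤ γ) (hBγ : 2 ≤ (B : ℝ) ^ γ) (j : ℕ) :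
    2 * blockLen γ (B ^ (j + 1)) ≤ B ^ (j + 1) + 2 := by
  refine blockLen.two_mul_le (hBγ.trans (Real.rpow_le_rpow (Nat.cast_nonneg B) ?_ hγ))
  exact_mod_cast Nat.le_self_pow (Nat.succ_ne_zero j) B

theorem frequently_Ioc_subset (hγ0 : 0 ≤ γ) (hB : 1 < B) (hBγ : 2 ≤ (B : ℝ) ^ γ) :
    ∃ᶠ N : ℕ in atTop, ∃ L : ℕ, (N : ℝ) ^ (1 - γ) ≤ L ∧ (L : ℝ) ≤ (N : ℝ) ^ (1 - γ) + 1 ∧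
      2 * L ≤ N + 2 ∧ Set.Ioc (N - L) N ⊆ blockSet γ B := by
  refine frequently_atTop.mpr fun M => ⟨B ^ (M + 1), (Nat.lt_pow_self hB).le.trans
    (Nat.pow_le_pow_right (by omega) M.le_succ), blockLen γ _, blockLen.rpow_le γ _,
    (blockLen.lt_rpow_add_one γ _).le, two_mul_blockLen_pow_le hγ0 hBγ M, ?_⟩
  exact Set.subset_iUnion_of_subset M subset_rfl

/-- Below `n < B^{j+1}`, with `j = log_B n`, only the first `j + 1` blocks can occur, since the
later ones start beyond `B^{j+2} / 2 - 1 ≥ B^{j+1}`. -/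
theorem card_filter_le (hγ0 : 0 ≤ γ) (hγ1 : γ ≤ 1) (hB : 4 ≤ B) (hBγ : 2 ≤ (B : ℝ) ^ γ)
    (n : ℕ) : ((Finset.Icc 1 n).filter (· ∈ blockSet γ B)).card ≤
      (Nat.log B n + 1) * blockLen γ (B ^ (Nat.log B n + 1)) := by
  set j := Nat.log B n
  set I : ℕ → Finset ℕ := fun i => Finset.Ioc (B ^ (i + 1) - blockLen γ (B ^ (i + 1))) (B ^ (i + 1))
  have hn : n < B ^ (j + 1) := Nat.lt_pow_succ_log_self (by omega) n
  have hsub : (Finset.Icc 1 n).filter (· ∈ blockSet γ B) ⊆ (Finset.range (j + 1)).biUnion I := by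
    intro k hk
    obtain ⟨hk, hkE⟩ := Finset.mem_filter.mp hk
    obtain ⟨i, hki⟩ := Set.mem_iUnion.mp hkE
    refine Finset.mem_biUnion.mpr ⟨i, Finset.mem_range.mpr ?_, Finset.mem_Ioc.mpr hki⟩
    by_contra hij
    have hpow : 4 * B ^ (j + 1) ≤ B ^ (i + 1) := by
      calc 4 * B ^ (j + 1) ≤ B ^ (j + 1 + 1) := by rw [pow_succ B (j + 1)]; nlinarith
        _ ≤ B ^ (i + 1) := Nat.pow_le_pow_right (by omega) (by omega)
    have := two_mul_blockLen_pow_le hγ0 hBγ i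
    simp only [Finset.mem_Icc, Set.mem_Ioc] at hk hki
    omega
  calc ((Finset.Icc 1 n).filter (· ∈ blockSet γ B)).card
      ≤ ∑ i ∈ Finset.range (j + 1), (I i).card :=
        (Finset.card_le_card hsub).trans Finset.card_biUnion_le
    _ ≤ ∑ _i ∈ Finset.range (j + 1), blockLen γ (B ^ (j + 1)) := by
      refine Finset.sum_le_sum fun i hi => ?_
      rw [Nat.card_Ioc]
      exact (by omega : _ ≤ blockLen γ (B ^ (i + 1))).trans (blockLen.monotone hγ1
        (Nat.pow_le_pow_right (by omega) (by simpa using Finset.mem_range.mp hi)))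
    _ = (j + 1) * blockLen γ (B ^ (j + 1)) := by simp

theorem tendsto_card_filter_div_rpow {g : ℝ} (hγ0 : 0 ≤ γ) (hγ1 : γ ≤ 1) (hgγ : g < γ)
    (hB : 4 ≤ B) (hBγ : 2 ≤ (B : ℝ) ^ γ) :
    Tendsto (fun n : ℕ => (((Finset.Icc 1 n).filter (· ∈ blockSet γ B)).card : ℝ) /
      (n : ℝ) ^ (1 - g)) atTop (𝓝 0) := by
  set ρ : ℝ := (B : ℝ) ^ (g - γ)
  have hB0 : (0 : ℝ) < B := by positivity
  have hρ0 : 0 ≤ ρ := Real.rpow_nonneg hB0.le _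
  have hρ1 : ρ < 1 :=
    Real.rpow_lt_one_of_one_lt_of_neg (by exact_mod_cast (by omega : 1 < B)) (by linarith)
  have hlog : Tendsto (Nat.log B) atTop atTop := tendsto_atTop_atTop.mpr fun k =>
    ⟨B ^ k, fun n hn => (Nat.log_pow (by omega) k).symm.le.trans (Nat.log_mono_right hn)⟩
  have hgeom : Tendsto (fun j : ℕ => 2 * B * ((j : ℝ) * ρ ^ j + ρ ^ j)) atTop (𝓝 0) := by
    simpa using ((tendsto_self_mul_const_pow_of_lt_one hρ0 hρ1).add
      (tendsto_pow_atTop_nhds_zero_of_lt_one hρ0 hρ1)).const_mul (2 * (B : ℝ))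
  refine squeeze_zero' (Eventually.of_forall fun n => by positivity) ?_ (hgeom.comp hlog)
  filter_upwards [eventually_ge_atTop 1] with n hn
  set j := Nat.log B n
  have hBj : (B : ℝ) ^ j ≤ n := by exact_mod_cast Nat.pow_log_le_self B (by omega : n ≠ 0)
  have hcard : (((Finset.Icc 1 n).filter (· ∈ blockSet γ B)).card : ℝ) ≤
      (j + 1) * (2 * ((B : ℝ) ^ (1 - γ)) ^ (j + 1)) := by
    have hlen := blockLen.le_two_mul_rpow hγ1 (Nat.one_le_pow (j + 1) B (by omega))
    rw [Nat.cast_pow, ← Real.rpow_pow_comm hB0.le] at hlen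
    calc (((Finset.Icc 1 n).filter (· ∈ blockSet γ B)).card : ℝ)
        ≤ ((j + 1) * blockLen γ (B ^ (j + 1)) : ℕ) := by
          exact_mod_cast card_filter_le hγ0 hγ1 hB hBγ n
      _ ≤ (j + 1) * (2 * ((B : ℝ) ^ (1 - γ)) ^ (j + 1)) := by push_cast; gcongr
  have hρ : ρ ^ j * ((B : ℝ) ^ (1 - g)) ^ j = ((B : ℝ) ^ (1 - γ)) ^ j := by
    rw [← mul_pow, ← Real.rpow_add hB0]; ring_nf
  have hBγ1 : (B : ℝ) ^ (1 - γ) ≤ B :=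
    Real.rpow_le_self_of_one_le (by exact_mod_cast (by omega : 1 ≤ B)) (by linarith)
  have hpos : 0 < ((B : ℝ) ^ (1 - g)) ^ j := by positivity
  calc (((Finset.Icc 1 n).filter (· ∈ blockSet γ B)).card : ℝ) / (n : ℝ) ^ (1 - g)
      ≤ (j + 1) * (2 * ((B : ℝ) ^ (1 - γ)) ^ (j + 1)) / ((B : ℝ) ^ (1 - g)) ^ j := by
        refine div_le_div₀ (by positivity) hcard hpos ?_
        rw [Real.rpow_pow_comm hB0.le]
        exact Real.rpow_le_rpow (by positivity) hBj (by linarith)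
    _ = 2 * (B : ℝ) ^ (1 - γ) * ((j : ℝ) * ρ ^ j + ρ ^ j) := by
        rw [div_eq_iff hpos.ne', pow_succ, ← hρ]; ring
    _ ≤ 2 * B * ((j : ℝ) * ρ ^ j + ρ ^ j) := by gcongr

end blockSet

/-- Lemma 4.4: for `0 < γ ≤ 1` there is `E_γ ⊆ ℕ` with positive upper `β^γ`-density but
zero upper `β^{γ'}`-density for every `0 ≤ γ' < γ`. -/
theorem stmt11 (γ : ℝ) (h0 : 0 < γ) (h1 : γ ≤ 1) :
    ∃ E : Set ℕ, 0 < upperDensityWt (betaGamma γ) E ∧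
      ∀ γ' : ℝ, 0 ≤ γ' → γ' < γ → upperDensityWt (betaGamma γ') E = 0 := by
  obtain ⟨B, hBγ, hB⟩ := ((((tendsto_rpow_atTop h0).comp tendsto_natCast_atTop_atTop)
    |>.eventually_ge_atTop 2).and (eventually_ge_atTop 4)).exists
  refine ⟨blockSet γ B, upperDensityWt_betaGamma_pos h0 h1
    (blockSet.frequently_Ioc_subset h0.le (by omega) hBγ), fun g hg hgγ => ?_⟩
  exact upperDensityWt_betaGamma_eq_zero hg (hgγ.le.trans h1)
    (blockSet.tendsto_card_filter_div_rpow h0.le h1 hgγ hB hBγ)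
end

section
/- Let (w_n)_{n≥0} be an increasing sequence of positive integers with w_{n+1}/w_n → +∞ as n → ∞, and let (a_n)_{n≥0} be a bounded sequence of positive real numbers with ∑_n a_n = +∞. Let h : ℝ₊ → ℝ₊ be a continuous increasing function with h(n) = w_n for all n ∈ ℕ, and set θ_a(x) = ∑_{n ≤ x} a_n for x ∈ ℝ₊. Then ∑_{n≥0} a_n r^{w_n} is asymptotically equivalent to θ_a(h^{−1}(1/(1−r))) as r → 1⁻; that is, the ratio (∑_{n≥0} a_n r^{w_n}) / θ_a(h^{−1}(1/(1−r))) tends to 1 as r → 1⁻. -/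
open Filter Set MeasureTheory
open scoped Topology ENNReal Real Classical

/-!
Put `N = ⌊h⁻¹(1/(1-r))⌋`, so that `w_N ≤ 1/(1-r) < w_{N+1}`, and let `M` bound `a`.
Since `w_{N+1}(1-r) ≥ 1`, we get `r^{w_{N+1}} ≤ 1/2`, and the at least geometric growth of `w`
makes the tail `∑_{n > N} a_n r^{w_n}` at most `M`; hence the series is `≤ θ_a(N) + M`.
Since `w_{n+1}/w_n → ∞`, every `n < N` has `w_n(1-r) ≤ η w_N (1-r) ≤ η` for large `N`, so
`r^{w_n} ≥ 1 - η` and the series is `≥ (1 - η)(θ_a(N) - M)`. As `θ_a(N) → ∞`, the ratio tends to `1`.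
-/

lemma one_sub_le_pow_of_mul_le {r η : ℝ} (hr : 0 ≤ r) {k : ℕ} (hk : k * (1 - r) ≤ η) :
    1 - η ≤ r ^ k := by
  have := one_add_mul_le_pow (a := r - 1) (by linarith) k
  rw [add_sub_cancel] at this
  linarith

lemma pow_le_half_of_one_le_mul {r : ℝ} (hr0 : 0 ≤ r) (hr1 : r ≤ 1) {k : ℕ}
    (hk : 1 ≤ k * (1 - r)) : r ^ k ≤ 1 / 2 := by
  have hbern : 2 ≤ (2 - r) ^ k := by
    have := one_add_mul_le_pow (a := 1 - r) (by linarith) k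
    rw [show (1 : ℝ) + (1 - r) = 2 - r by ring] at this
    linarith
  have hprod : (r * (2 - r)) ^ k ≤ 1 := pow_le_one₀ (by nlinarith) (by nlinarith)
  rw [mul_pow] at hprod
  nlinarith [pow_nonneg hr0 k]

lemma succ_mul_le_of_two_mul_le {w : ℕ → ℕ} {m : ℕ} (hw : ∀ n, m ≤ n → 2 * w n ≤ w (n + 1))
    (j : ℕ) : (j + 1) * w m ≤ w (j + m) := by
  induction j with
  | zero => simp
  | succ j ih =>
    have := hw (j + m) (Nat.le_add_left _ _)
    rw [show j + 1 + m = j + m + 1 by omega]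
    nlinarith

section PowerSeriesBounds

variable {w : ℕ → ℕ} {a : ℕ → ℝ} {M r : ℝ}

lemma summable_mul_pow_of_le (hw : ∀ n, n ≤ w n) (ha0 : ∀ n, 0 ≤ a n) (haM : ∀ n, a n ≤ M)
    (hr0 : 0 ≤ r) (hr1 : r < 1) : Summable (fun n => a n * r ^ w n) :=
  Summable.of_nonneg_of_le (fun n => mul_nonneg (ha0 n) (pow_nonneg hr0 _))
    (fun n => mul_le_mul (haM n) (pow_le_pow_of_le_one hr0 hr1.le (hw n)) (pow_nonneg hr0 _)
      ((ha0 0).trans (haM 0)))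
    ((summable_geometric_of_lt_one hr0 hr1).mul_left M)

lemma tsum_mul_pow_le_sum_range_add {m : ℕ} (hw : ∀ n, m ≤ n → 2 * w n ≤ w (n + 1))
    (ha0 : ∀ n, 0 ≤ a n) (haM : ∀ n, a n ≤ M) (hr0 : 0 ≤ r) (hr1 : r < 1)
    (hm : 1 / (1 - r) ≤ w m) (hs : Summable (fun n => a n * r ^ w n)) :
    ∑' n, a n * r ^ w n ≤ ∑ n ∈ Finset.range m, a n + M := by
  set q := r ^ w m
  have hq0 : 0 ≤ q := pow_nonneg hr0 _
  have hq : q ≤ 1 / 2 :=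
    pow_le_half_of_one_le_mul hr0 hr1.le ((div_le_iff₀ (by linarith)).1 hm)
  have hM0 : 0 ≤ M := (ha0 0).trans (haM 0)
  have hterm : ∀ j, a (j + m) * r ^ w (j + m) ≤ M * q * q ^ j := fun j => by
    calc a (j + m) * r ^ w (j + m) ≤ M * r ^ ((j + 1) * w m) :=
          mul_le_mul (haM _) (pow_le_pow_of_le_one hr0 hr1.le (succ_mul_le_of_two_mul_le hw j))
            (pow_nonneg hr0 _) hM0
      _ = M * q * q ^ j := by rw [mul_comm, pow_mul]; ring
  have htail : ∑' j, a (j + m) * r ^ w (j + m) ≤ M :=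
    calc ∑' j, a (j + m) * r ^ w (j + m) ≤ ∑' j, M * q * q ^ j :=
          Summable.tsum_le_tsum hterm ((summable_nat_add_iff m).2 hs)
            ((summable_geometric_of_lt_one hq0 (by linarith)).mul_left _)
      _ = M * (q / (1 - q)) := by
          rw [tsum_mul_left, tsum_geometric_of_lt_one hq0 (by linarith)]; ring
      _ ≤ M * 1 := by gcongr; rw [div_le_one (by linarith)]; linarith
      _ = M := mul_one M
  have hhead : ∑ n ∈ Finset.range m, a n * r ^ w n ≤ ∑ n ∈ Finset.range m, a n :=
    Finset.sum_le_sum fun n _ => mul_le_of_le_one_right (ha0 n) (pow_le_one₀ hr0 hr1.le)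
  rw [← hs.sum_add_tsum_nat_add m]
  exact add_le_add hhead htail

lemma mul_sum_range_sub_le_tsum {η : ℝ} {N : ℕ} (hη : η ≤ 1) (ha0 : ∀ n, 0 ≤ a n)
    (haM : ∀ n, a n ≤ M) (hr0 : 0 ≤ r) (hr1 : r < 1) (hN : ∀ n < N, (w n : ℝ) ≤ η / (1 - r))
    (hs : Summable (fun n => a n * r ^ w n)) :
    (1 - η) * (∑ n ∈ Finset.range (N + 1), a n - M) ≤ ∑' n, a n * r ^ w n := by
  have hpow : ∀ n < N, 1 - η ≤ r ^ w n := fun n hn =>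
    one_sub_le_pow_of_mul_le hr0 ((le_div_iff₀ (by linarith)).1 (hN n hn))
  calc (1 - η) * (∑ n ∈ Finset.range (N + 1), a n - M)
      ≤ (1 - η) * ∑ n ∈ Finset.range N, a n := by
        rw [Finset.sum_range_succ]; gcongr; linarith [haM N]
    _ ≤ ∑ n ∈ Finset.range N, a n * r ^ w n := by
        rw [Finset.mul_sum]
        refine Finset.sum_le_sum fun n hn => ?_
        rw [mul_comm (a n)]
        exact mul_le_mul_of_nonneg_right (hpow n (Finset.mem_range.1 hn)) (ha0 n)
    _ ≤ ∑' n, a n * r ^ w n :=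
        hs.sum_le_tsum _ fun n _ => mul_nonneg (ha0 n) (pow_nonneg hr0 _)

end PowerSeriesBounds

lemma eventually_mul_le_succ {w : ℕ → ℕ} (hwpos : ∀ n, 0 < w n)
    (hwrat : Tendsto (fun n : ℕ => (w (n + 1) : ℝ) / (w n : ℝ)) atTop atTop) (C : ℝ) :
    ∀ᶠ n in atTop, C * w n ≤ w (n + 1) := by
  filter_upwards [hwrat.eventually_ge_atTop C] with n hn
  exact (le_div_iff₀ (by exact_mod_cast hwpos n)).1 hn

lemma cast_le_mul_of_lt {w : ℕ → ℕ} (hw : Monotone w) {η : ℝ} {N₁ N : ℕ}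
    (hratio : ∀ n, N₁ ≤ n → η⁻¹ * w n ≤ w (n + 1)) (hη : 0 < η) (hN : N₁ < N) :
    ∀ n < N, (w n : ℝ) ≤ η * w N := by
  intro n hn
  obtain ⟨K, rfl⟩ : ∃ K, N = K + 1 := ⟨N - 1, by omega⟩
  calc (w n : ℝ) ≤ w K := by exact_mod_cast hw (by omega)
    _ = η * (η⁻¹ * w K) := by field_simp
    _ ≤ η * w (K + 1) := by gcongr; exact hratio K (by omega)

section InverseFunction

variable {h hinv : ℝ → ℝ} (hmono : StrictMonoOn h (Ici 0))
  (hinv_right : ∀ y : ℝ, h 0 ≤ y → 0 ≤ hinv y ∧ h (hinv y) = y)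
include hmono hinv_right

lemma tendsto_atTop_of_rightInverse : Tendsto hinv atTop atTop := by
  refine tendsto_atTop.2 fun b => ?_
  have hb : (0 : ℝ) ≤ max b 0 := le_max_right b 0
  filter_upwards [eventually_ge_atTop (h (max b 0))] with y hy
  obtain ⟨hy0, hhy⟩ := hinv_right y ((hmono.monotoneOn self_mem_Ici hb hb).trans hy)
  refine (le_max_left b 0).trans (not_lt.1 fun hlt => ?_)
  have := hmono hy0 hb hlt
  linarith

lemma mem_Ico_floor_rightInverse {w : ℕ → ℕ} (hh : ∀ n : ℕ, h n = w n) {y : ℝ} (hy : h 0 ≤ y) :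
    y ∈ Ico (w ⌊hinv y⌋₊ : ℝ) (w (⌊hinv y⌋₊ + 1)) := by
  obtain ⟨hx0, hhx⟩ := hinv_right y hy
  have hle := hmono.monotoneOn (mem_Ici.2 (Nat.cast_nonneg _)) hx0 (Nat.floor_le hx0)
  have hlt : h (hinv y) < h ((⌊hinv y⌋₊ + 1 : ℕ) : ℝ) :=
    hmono hx0 (mem_Ici.2 (Nat.cast_nonneg _)) (by push_cast; exact Nat.lt_floor_add_one _)
  rw [hh, hhx] at hle hlt
  exact ⟨hle, hlt⟩

end InverseFunction

lemma tendsto_one_div_one_sub_atTop :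
    Tendsto (fun r : ℝ => 1 / (1 - r)) (𝓝[Ioo 0 1] 1) atTop := by
  have hsub : Tendsto (fun r : ℝ => 1 - r) (𝓝[Ioo 0 1] 1) (𝓝[>] 0) := by
    refine tendsto_nhdsWithin_iff.2 ⟨?_, ?_⟩
    · exact ((continuous_const.sub continuous_id).tendsto' (1 : ℝ) 0 (sub_self 1)).mono_left
        nhdsWithin_le_nhds
    · filter_upwards [self_mem_nhdsWithin] with r hr
      exact sub_pos.2 hr.2
  simpa only [one_div, Function.comp_def] using tendsto_inv_nhdsGT_zero.comp hsub

lemma tendsto_div_nhds_one_of_bounds {ι : Type*} {l : Filter ι} {S θ : ι → ℝ} {M : ℝ}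
    (hθ : Tendsto θ l atTop) (hup : ∀ᶠ i in l, S i ≤ θ i + M)
    (hlow : ∀ η ∈ Ioo (0 : ℝ) 1, ∀ᶠ i in l, (1 - η) * (θ i - M) ≤ S i) :
    Tendsto (fun i => S i / θ i) l (𝓝 1) := by
  have hMθ : Tendsto (fun i => M / θ i) l (𝓝 0) := tendsto_const_nhds.div_atTop hθ
  refine tendsto_order.2 ⟨fun b hb => ?_, fun b hb => ?_⟩
  · set δ := min (1 / 2) ((1 - b) / 2)
    have hδ : 0 < δ := lt_min (by norm_num) (by linarith)
    have hδ1 : δ < 1 := (min_le_left _ _).trans_lt (by norm_num)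
    have hδb : b ≤ 1 - 2 * δ := by linarith [min_le_right (1 / 2 : ℝ) ((1 - b) / 2)]
    filter_upwards [hlow δ ⟨hδ, hδ1⟩, hθ.eventually_gt_atTop 0,
      hMθ.eventually (gt_mem_nhds hδ)] with i hi hθi hMi
    rw [lt_div_iff₀ hθi]
    rw [div_lt_iff₀ hθi] at hMi
    nlinarith [mul_pos (sub_pos.2 hδ1) (sub_pos.2 hMi), mul_pos (mul_pos hδ hδ) hθi]
  · filter_upwards [hup, hθ.eventually_gt_atTop 0,
      hMθ.eventually (gt_mem_nhds (sub_pos.2 hb))] with i hi hθi hMi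
    rw [div_lt_iff₀ hθi]
    rw [div_lt_iff₀ hθi] at hMi
    linarith

theorem stmt16_general (w : ℕ → ℕ) (hwpos : ∀ n, 0 < w n) (hwmono : StrictMono w)
    (hwrat : Tendsto (fun n : ℕ => (w (n + 1) : ℝ) / (w n : ℝ)) atTop atTop)
    (a : ℕ → ℝ) (hapos : ∀ n, 0 < a n) (habd : ∃ M : ℝ, ∀ n, a n ≤ M)
    (hadiv : Tendsto (fun n : ℕ => ∑ k ∈ Finset.range n, a k) atTop atTop)
    (h : ℝ → ℝ) (hmono : StrictMonoOn h (Set.Ici 0))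
    (hh : ∀ n : ℕ, h n = w n) (hinv : ℝ → ℝ)
    (hinv_right : ∀ y : ℝ, h 0 ≤ y → 0 ≤ hinv y ∧ h (hinv y) = y) :
    Tendsto (fun r : ℝ =>
        (∑' n : ℕ, a n * r ^ w n) /
          ∑ n ∈ Finset.range (⌊hinv (1 / (1 - r))⌋₊ + 1), a n)
      (nhdsWithin 1 (Set.Ioo 0 1)) (nhds 1) := by
  obtain ⟨M, hM⟩ := habd
  have ha0 : ∀ n, 0 ≤ a n := fun n => (hapos n).le
  have hy := tendsto_one_div_one_sub_atTop
  have hN := tendsto_nat_floor_atTop.comp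
    ((tendsto_atTop_of_rightInverse hmono hinv_right).comp hy)
  have hs : ∀ r ∈ Ioo (0 : ℝ) 1, Summable (fun n => a n * r ^ w n) := fun r hr =>
    summable_mul_pow_of_le (fun n => hwmono.le_apply) ha0 hM hr.1.le hr.2
  have hθ := (hadiv.comp (tendsto_add_atTop_nat 1)).comp hN
  refine tendsto_div_nhds_one_of_bounds (M := M) hθ ?_ fun η hη => ?_
  · obtain ⟨N₀, hN₀⟩ := eventually_atTop.1 (eventually_mul_le_succ hwpos hwrat 2)
    filter_upwards [self_mem_nhdsWithin, hy.eventually_ge_atTop (h 0),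
      hN.eventually_ge_atTop N₀] with r hr hhy hNr
    exact tsum_mul_pow_le_sum_range_add
      (fun n hn => by exact_mod_cast hN₀ n (hNr.trans (Nat.le_of_succ_le hn))) ha0 hM hr.1.le hr.2
      (mem_Ico_floor_rightInverse hmono hinv_right hh hhy).2.le (hs r hr)
  · obtain ⟨N₁, hN₁⟩ := eventually_atTop.1 (eventually_mul_le_succ hwpos hwrat η⁻¹)
    filter_upwards [self_mem_nhdsWithin, hy.eventually_ge_atTop (h 0),
      hN.eventually_gt_atTop N₁] with r hr hhy hNr
    refine mul_sum_range_sub_le_tsum hη.2.le ha0 hM hr.1.le hr.2 (fun n hn => ?_) (hs r hr)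
    calc (w n : ℝ) ≤ η * w ⌊hinv (1 / (1 - r))⌋₊ :=
          cast_le_mul_of_lt hwmono.monotone hN₁ hη.1 hNr n hn
      _ ≤ η * (1 / (1 - r)) :=
          mul_le_mul_of_nonneg_left (mem_Ico_floor_rightInverse hmono hinv_right hh hhy).1 hη.1.le
      _ = η / (1 - r) := mul_one_div η (1 - r)

/-- Lemma 5.1: if `(w_n)` is an increasing sequence of positive integers with
`w_{n+1}/w_n → ∞`, `(a_n)` is bounded, positive, with divergent series, and `h` is a
continuous increasing function on `ℝ₊` with `h(n) = w_n`, then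
`∑_n a_n r^{w_n} ∼ θ_a(h⁻¹(1/(1-r)))` as `r → 1⁻`, where `θ_a(x) = ∑_{n ≤ x} a_n`. -/
theorem stmt16 (w : ℕ → ℕ) (hwpos : ∀ n, 0 < w n) (hwmono : StrictMono w)
    (hwrat : Tendsto (fun n : ℕ => (w (n + 1) : ℝ) / (w n : ℝ)) atTop atTop)
    (a : ℕ → ℝ) (hapos : ∀ n, 0 < a n) (habd : ∃ M : ℝ, ∀ n, a n ≤ M)
    (hadiv : Tendsto (fun n : ℕ => ∑ k ∈ Finset.range n, a k) atTop atTop)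
    (h : ℝ → ℝ) (hmono : StrictMonoOn h (Set.Ici 0)) (hcont : ContinuousOn h (Set.Ici 0))
    (hpos : ∀ x : ℝ, 0 ≤ x → 0 ≤ h x) (hh : ∀ n : ℕ, h n = w n)
    (hinv : ℝ → ℝ) (hinv_left : ∀ x : ℝ, 0 ≤ x → hinv (h x) = x)
    (hinv_right : ∀ y : ℝ, h 0 ≤ y → 0 ≤ hinv y ∧ h (hinv y) = y) :
    Tendsto (fun r : ℝ =>
        (∑' n : ℕ, a n * r ^ w n) /
          ∑ n ∈ Finset.range (⌊hinv (1 / (1 - r))⌋₊ + 1), a n)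
      (nhdsWithin 1 (Set.Ioo 0 1)) (nhds 1) :=
  stmt16_general w hwpos hwmono hwrat a hapos habd hadiv h hmono hh hinv hinv_right
end
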